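/- The polynomials Φ_n satisfy the flatness recursion and boundary conditions: Φ_0''''(x) = 0 for all x, Φ_0(0) = Φ_0''(0) = Φ_0'(1) = 0 and Φ_0'''(1) = −1; and for every integer n ≥ 1, the fourth derivative satisfies Φ_n''''(x) = −Φ_{n−1}(x) for all x ∈ ℝ, with boundary values Φ_n(0) = 0, Φ_n''(0) = 0, Φ_n'(1) = 0 and Φ_n'''(1) = Ψ_n. -/

import Mathlib

/-!
Every `Φ_n` is a signed combination of the divided powers `x^m / m!`, which differentiation
shifts down by one (killing `x^0 / 0!`), so derivatives and boundary values can be read off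
term by term. Four derivatives kill the `k = 0` terms and shift `k + 1` to `k`, leaving
`-Φ_{n-1}`. All exponents are odd, so the even derivatives vanish at `0`. At `1`, the first
derivative is a difference of two sums exchanged by `k ↦ n - k`, and the third derivative is
`Ψ_n` term by term.
-/

open Finset

/-- `Φ_0(x) = x/2 − x³/6`; for `n ≥ 1`,
`Φ_n(x) = (−1)^n [ Σ_{k=0}^n x^{4k+1}/((4k+1)!(4(n−k)+2)!)
− Σ_{k=0}^n x^{4k+3}/((4k+3)!(4(n−k))!) ]`. -/
noncomputable def PhiF (n : ℕ) (x : ℝ) : ℝ :=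
  if n = 0 then x / 2 - x ^ 3 / 6
  else
    (-1 : ℝ) ^ n *
      ((∑ k ∈ Finset.range (n + 1),
          x ^ (4 * k + 1) / (((4 * k + 1).factorial : ℝ) * ((4 * (n - k) + 2).factorial : ℝ))) -
       (∑ k ∈ Finset.range (n + 1),
          x ^ (4 * k + 3) / (((4 * k + 3).factorial : ℝ) * ((4 * (n - k)).factorial : ℝ))))

/-- `Ψ_n = (−1)^n [ Σ_{k=1}^n 1/((4k−2)!(4(n−k)+2)!) − Σ_{k=0}^n 1/((4k)!(4(n−k))!) ]`. -/
noncomputable def PsiN (n : ℕ) : ℝ :=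
  (-1 : ℝ) ^ n *
    ((∑ k ∈ Finset.Icc 1 n,
        (1 : ℝ) / (((4 * k - 2).factorial : ℝ) * ((4 * (n - k) + 2).factorial : ℝ))) -
     (∑ k ∈ Finset.range (n + 1),
        (1 : ℝ) / (((4 * k).factorial : ℝ) * ((4 * (n - k)).factorial : ℝ))))

open Polynomial Nat

namespace Polynomial

variable {K : Type*} [Field K]

noncomputable def dividedPower (k : ℕ) : K[X] := C (k ! : K)⁻¹ * X ^ k

@[simp]
theorem derivative_dividedPower_zero : derivative (dividedPower 0 : K[X]) = 0 := by
  simp [dividedPower]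

@[simp]
theorem derivative_dividedPower_succ [CharZero K] (k : ℕ) :
    derivative (dividedPower (k + 1) : K[X]) = dividedPower k := by
  simp only [dividedPower, derivative_C_mul_X_pow, Nat.add_sub_cancel, factorial_succ,
    Nat.cast_mul]
  congr 2
  field_simp

theorem iterate_derivative_dividedPower [CharZero K] (j k : ℕ) :
    derivative^[j] (dividedPower k : K[X]) = if j ≤ k then dividedPower (k - j) else 0 := by
  induction j generalizing k with
  | zero => simp
  | succ j ih =>
    rw [Function.iterate_succ_apply]
    cases k with
    | zero => simp
    | succ k => simp [ih]

theorem iterate_derivative_dividedPower_add [CharZero K] (j k : ℕ) :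
    derivative^[j] (dividedPower (k + j) : K[X]) = dividedPower k := by
  simp [iterate_derivative_dividedPower]

theorem iterate_derivative_dividedPower_of_lt [CharZero K] {j k : ℕ} (h : k < j) :
    derivative^[j] (dividedPower k : K[X]) = 0 := by
  simp [iterate_derivative_dividedPower, h]

theorem eval_zero_iterate_derivative_dividedPower [CharZero K] (j k : ℕ) :
    (derivative^[j] (dividedPower k : K[X])).eval 0 = if k = j then 1 else 0 := by
  rw [iterate_derivative_dividedPower]
  by_cases h : j ≤ k
  · obtain ⟨i, rfl⟩ := Nat.exists_eq_add_of_le h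
    cases i <;> simp [dividedPower]
  · simp [h, show k ≠ j by omega]

theorem eval_one_iterate_derivative_dividedPower [CharZero K] (j k : ℕ) :
    (derivative^[j] (dividedPower k : K[X])).eval 1 = if j ≤ k then ((k - j)! : K)⁻¹ else 0 := by
  rw [iterate_derivative_dividedPower]
  split_ifs <;> simp [dividedPower]

end Polynomial

theorem iteratedDeriv_polynomial_eval {𝕜 : Type*} [NontriviallyNormedField 𝕜] (p : 𝕜[X]) (j : ℕ) :
    iteratedDeriv j (fun x => p.eval x) = fun x => (derivative^[j] p).eval x := by
  induction j generalizing p with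
  | zero => simp
  | succ j ih =>
    rw [iteratedDeriv_succ', Function.iterate_succ_apply, ← ih]
    exact congrArg (iteratedDeriv j) (funext fun _ => p.deriv)

noncomputable def phiTerm (n k : ℕ) : ℝ[X] :=
  C ((4 * (n - k) + 2)! : ℝ)⁻¹ * dividedPower (4 * k + 1) -
    C ((4 * (n - k))! : ℝ)⁻¹ * dividedPower (4 * k + 3)

-- `phiPoly n` evaluates to `PhiF n` also at `n = 0`, where the general formula gives
-- `x/2 - x³/6` as well.
noncomputable def phiPoly (n : ℕ) : ℝ[X] := C ((-1) ^ n) * ∑ k ∈ range (n + 1), phiTerm n k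

theorem eval_iterate_derivative_phiPoly (n j : ℕ) (x : ℝ) :
    (derivative^[j] (phiPoly n)).eval x = (-1) ^ n * ∑ k ∈ range (n + 1),
      ((derivative^[j] (dividedPower (4 * k + 1))).eval x / ((4 * (n - k) + 2)! : ℝ) -
        (derivative^[j] (dividedPower (4 * k + 3))).eval x / ((4 * (n - k))! : ℝ)) := by
  simp only [phiPoly, phiTerm, iterate_derivative_C_mul, iterate_derivative_sum,
    iterate_derivative_sub, eval_mul, eval_C, eval_finsetSum, eval_sub]
  congr 1
  exact sum_congr rfl fun k _ => by ring

theorem phiF_eq_eval_phiPoly (n : ℕ) : PhiF n = fun x => (phiPoly n).eval x := by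
  funext x
  rw [← Function.iterate_zero_apply derivative (phiPoly n), eval_iterate_derivative_phiPoly]
  rcases eq_or_ne n 0 with rfl | hn
  · norm_num [PhiF, dividedPower]
    ring
  · simp only [PhiF, if_neg hn, ← sum_sub_distrib, Function.iterate_zero_apply, dividedPower,
      eval_mul, eval_C, eval_pow, eval_X]
    congr 1
    exact sum_congr rfl fun k _ => by ring

theorem eval_zero_iterate_derivative_phiPoly_of_even (n : ℕ) {j : ℕ} (hj : Even j) :
    (derivative^[j] (phiPoly n)).eval 0 = 0 := by
  obtain ⟨r, rfl⟩ := hj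
  rw [eval_iterate_derivative_phiPoly]
  refine mul_eq_zero_of_right _ (sum_eq_zero fun k _ => ?_)
  rw [eval_zero_iterate_derivative_dividedPower, eval_zero_iterate_derivative_dividedPower,
    if_neg (by omega), if_neg (by omega), zero_div, zero_div, sub_self]

theorem eval_one_derivative_phiPoly (n : ℕ) : (derivative (phiPoly n)).eval 1 = 0 := by
  rw [← Function.iterate_one derivative, eval_iterate_derivative_phiPoly, sum_sub_distrib]
  simp only [eval_one_iterate_derivative_dividedPower, Nat.le_add_left, if_true,
    Nat.add_sub_cancel, show ∀ k, 4 * k + 3 - 1 = 4 * k + 2 by omega]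
  rw [← sum_range_reflect, sub_eq_zero_of_eq, mul_zero]
  refine sum_congr rfl fun k hk => ?_
  rw [show n - (n + 1 - 1 - k) = k by simp at hk; omega, show n + 1 - 1 - k = n - k by omega,
    inv_div_comm]

theorem eval_one_iterate_derivative_three_phiPoly (n : ℕ) :
    (derivative^[3] (phiPoly n)).eval 1 = PsiN n := by
  rw [eval_iterate_derivative_phiPoly, PsiN, sum_sub_distrib]
  simp only [eval_one_iterate_derivative_dividedPower]
  congr 2
  · rw [sum_range_succ', ← Ico_add_one_right_eq_Icc, sum_Ico_eq_sum_range, if_neg (by omega),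
      zero_div, add_zero, Nat.add_sub_cancel]
    refine sum_congr rfl fun k _ => ?_
    rw [if_pos (by omega), show 4 * (k + 1) + 1 - 3 = 4 * (1 + k) - 2 by omega, add_comm k 1,
      one_div, mul_inv, div_eq_mul_inv]
  · refine sum_congr rfl fun k _ => ?_
    rw [if_pos (by omega), Nat.add_sub_cancel, one_div, mul_inv, div_eq_mul_inv]

theorem iterate_derivative_four_phiTerm_zero (n : ℕ) : derivative^[4] (phiTerm n 0) = 0 := by
  simp [phiTerm, iterate_derivative_C_mul, iterate_derivative_dividedPower_of_lt]

theorem iterate_derivative_four_phiTerm_succ (n k : ℕ) :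
    derivative^[4] (phiTerm (n + 1) (k + 1)) = phiTerm n k := by
  rw [phiTerm, phiTerm, iterate_derivative_sub, iterate_derivative_C_mul,
    iterate_derivative_C_mul, Nat.add_sub_add_right, show 4 * (k + 1) + 1 = 4 * k + 1 + 4 by ring,
    show 4 * (k + 1) + 3 = 4 * k + 3 + 4 by ring, iterate_derivative_dividedPower_add,
    iterate_derivative_dividedPower_add]

theorem iterate_derivative_four_phiPoly_zero : derivative^[4] (phiPoly 0) = 0 := by
  simp [phiPoly, iterate_derivative_four_phiTerm_zero]

theorem iterate_derivative_four_phiPoly_succ (n : ℕ) :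
    derivative^[4] (phiPoly (n + 1)) = -phiPoly n := by
  rw [phiPoly, phiPoly, iterate_derivative_C_mul, iterate_derivative_sum, sum_range_succ',
    iterate_derivative_four_phiTerm_zero]
  simp only [iterate_derivative_four_phiTerm_succ, add_zero, pow_succ, C_mul, C_neg, C_1]
  ring

theorem iteratedDeriv_phiF (n j : ℕ) (x : ℝ) :
    iteratedDeriv j (PhiF n) x = (derivative^[j] (phiPoly n)).eval x := by
  rw [phiF_eq_eval_phiPoly, iteratedDeriv_polynomial_eval]

/-- The flatness recursion and boundary conditions for the `Φ_n`:
`Φ_0'''' ≡ 0`, `Φ_0(0) = Φ_0''(0) = Φ_0'(1) = 0`, `Φ_0'''(1) = −1`; and for `n ≥ 1`,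
`Φ_n'''' = −Φ_{n−1}` on `ℝ`, with `Φ_n(0) = 0`, `Φ_n''(0) = 0`, `Φ_n'(1) = 0` and
`Φ_n'''(1) = Ψ_n`. -/
theorem stmt13 :
    (∀ x : ℝ, iteratedDeriv 4 (PhiF 0) x = 0) ∧
    PhiF 0 0 = 0 ∧ iteratedDeriv 2 (PhiF 0) 0 = 0 ∧ deriv (PhiF 0) 1 = 0 ∧
    iteratedDeriv 3 (PhiF 0) 1 = -1 ∧
    ∀ n : ℕ, 1 ≤ n →
      (∀ x : ℝ, iteratedDeriv 4 (PhiF n) x = -(PhiF (n - 1) x)) ∧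
      PhiF n 0 = 0 ∧ iteratedDeriv 2 (PhiF n) 0 = 0 ∧ deriv (PhiF n) 1 = 0 ∧
      iteratedDeriv 3 (PhiF n) 1 = PsiN n := by
  have boundary (n : ℕ) : PhiF n 0 = 0 ∧ iteratedDeriv 2 (PhiF n) 0 = 0 ∧
      deriv (PhiF n) 1 = 0 ∧ iteratedDeriv 3 (PhiF n) 1 = PsiN n := by
    nth_rw 1 [← iteratedDeriv_zero (f := PhiF n)]
    rw [← iteratedDeriv_one, iteratedDeriv_phiF, iteratedDeriv_phiF, iteratedDeriv_phiF,
      iteratedDeriv_phiF]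
    exact ⟨eval_zero_iterate_derivative_phiPoly_of_even n Even.zero,
      eval_zero_iterate_derivative_phiPoly_of_even n even_two, eval_one_derivative_phiPoly n,
      eval_one_iterate_derivative_three_phiPoly n⟩
  have psiN_zero : PsiN 0 = -1 := by norm_num [PsiN]
  obtain ⟨value_zero, second_zero, first_one, third_one⟩ := boundary 0
  refine ⟨fun x => ?_, value_zero, second_zero, first_one, psiN_zero ▸ third_one,
    fun n hn => ⟨fun x => ?_, boundary n⟩⟩
  · rw [iteratedDeriv_phiF, iterate_derivative_four_phiPoly_zero, eval_zero]
  · obtain ⟨m, rfl⟩ := Nat.exists_eq_add_of_le' hn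
    rw [iteratedDeriv_phiF, iterate_derivative_four_phiPoly_succ, eval_neg, phiF_eq_eval_phiPoly,
      Nat.add_sub_cancel]
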